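/- arXiv:2202.10257 — 4 statements merged into one kernel-verified Lean document; each statement's English description precedes it below -/
import Mathlib

section
/- Let Γ₀ be a subgroup of a group H₀, let M be a generating set of H₀ (i.e. H₀ = ⋃_{n≥1} Mⁿ), and let U ⊆ H₀ be a fundamental set of Γ₀ in H₀ (i.e. H₀ = U Γ₀). Then Γ₀ is generated by (U⁻¹ M U) ∩ Γ₀. -/
open Pointwise

/-- If `M` generates `H` (every element is a finite product of elements of `M`) and `U` is a
fundamental set of the subgroup `Γ` in `H` (i.e. `H = U Γ`), then `Γ` is generated by
`(U⁻¹ M U) ∩ Γ`. -/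
theorem generating_set_abstract_lemma {H : Type*} [Group H] (Γ : Subgroup H) (M U : Set H)
    (hM : ∀ h : H, ∃ n : ℕ, 1 ≤ n ∧ h ∈ M ^ n)
    (hU : ∀ h : H, ∃ u ∈ U, ∃ γ ∈ Γ, h = u * γ) :
    Subgroup.closure ((U⁻¹ * M * U) ∩ (Γ : Set H)) = Γ := by
  set S : Set H := (U⁻¹ * M * U) ∩ (Γ : Set H) with hSdef
  have key : ∀ n : ℕ, 1 ≤ n → ∀ h ∈ M ^ n, ∀ u ∈ U, ∀ u' ∈ U,
      u⁻¹ * h * u' ∈ Γ → u⁻¹ * h * u' ∈ Subgroup.closure S := by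
    intro n hn
    induction n, hn using Nat.le_induction with
    | base =>
      intro h hh u hu u' hu' hγ
      rw [pow_one] at hh
      exact Subgroup.subset_closure
        ⟨Set.mul_mem_mul (Set.mul_mem_mul (Set.inv_mem_inv.mpr hu) hh) hu', hγ⟩
    | succ n hn ih =>
      intro h hh u hu u' hu' hγ
      rw [pow_succ] at hh
      obtain ⟨a, ha, m, hm, rfl⟩ := hh
      obtain ⟨u'', hu'', γ'', hγ'', hmu⟩ := hU (m * u')
      have hm' : u''⁻¹ * m * u' = γ'' := by
        rw [mul_assoc, hmu]; group
      have hγ''S : u''⁻¹ * m * u' ∈ Subgroup.closure S :=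
        Subgroup.subset_closure
          ⟨Set.mul_mem_mul (Set.mul_mem_mul (Set.inv_mem_inv.mpr hu'') hm) hu',
            hm' ▸ hγ''⟩
      have hid : u⁻¹ * (a * m) * u' = (u⁻¹ * a * u'') * (u''⁻¹ * m * u') := by group
      have haΓ : u⁻¹ * a * u'' ∈ Γ := by
        have : u⁻¹ * a * u'' = (u⁻¹ * (a * m) * u') * (u''⁻¹ * m * u')⁻¹ := by group
        rw [this]
        exact mul_mem hγ (inv_mem (hm' ▸ hγ''))
      rw [hid]
      exact mul_mem (ih a ha u hu u'' hu'' haΓ) hγ''S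
  apply le_antisymm
  · exact (Subgroup.closure_le Γ).mpr Set.inter_subset_right
  · intro γ hγ
    obtain ⟨u₀, hu₀, γ₀, hγ₀, h1⟩ := hU 1
    obtain ⟨n, hn, hh⟩ := hM (u₀ * γ * u₀⁻¹)
    have := key n hn (u₀ * γ * u₀⁻¹) hh u₀ hu₀ u₀ hu₀ (by
      have : u₀⁻¹ * (u₀ * γ * u₀⁻¹) * u₀ = γ := by group
      rw [this]; exact hγ)
    have heq : u₀⁻¹ * (u₀ * γ * u₀⁻¹) * u₀ = γ := by group
    rwa [heq] at this
end

section
/- Let p be a prime and consider the Harish-Chandra function Ξ_p(g) = ∫_{SL(2,ℤ_p)} ‖g k e₁‖_p^{−1} dk on SL(2, ℚ_p), where dk is the Haar probability measure, e₁ = (1,0), and ‖·‖_p is the max-norm on ℚ_p². Then for every integer m ≥ 0, Ξ_p(diag(p^{−m}, p^m)) = p^{−m}((2m+1)(p−1) + 2)/(p+1). -/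
/-!
Write `B_j(a)` for the set of `k ∈ SL(2, ℤ_p)` with `k₂₁` a unit and `k₁₁ / k₂₁ ∈ a + p^j ℤ_p`,
and `B_∞` for those with `k₁₁` a unit and `k₂₁ ∈ p ℤ_p`. Left translation by `!![1, a; 0, 1]`
carries `B_j(a)` onto `B_j(0)`, and translation by the Weyl element carries `B_∞` onto `B_1(0)`.
As `B_0(0)` is the disjoint union of the `p^j` balls `B_j(a)`, `0 ≤ a < p^j`, and
`SL(2, ℤ_p) = B_0(0) ⊔ B_∞`, invariance of `μ` forces `μ(B_j(0)) = p^{1-j} / (p + 1)`.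
The integrand is `p^{n-m}` on `B_n(0) \ B_{n+1}(0)` for `n < 2m`, `p^m` on `B_{2m}(0)` and
`p^{-m}` on `B_∞`; adding up these contributions gives the formula.
-/

open MeasureTheory

/-- The compact group `SL(2, ℤ_p)`, realized as the set of `2 × 2` matrices over `ℚ_p` with
determinant `1` and entries of norm at most `1`. -/
def SL2Zp (p : ℕ) [Fact p.Prime] : Set (Matrix (Fin 2) (Fin 2) ℚ_[p]) :=
  {k | k.det = 1 ∧ ∀ i j, ‖k i j‖ ≤ 1}

/-- The diagonal matrix `diag(p^{−m}, p^m)` in `SL(2, ℚ_p)`. -/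
noncomputable def diagPm (p : ℕ) [Fact p.Prime] (m : ℕ) : Matrix (Fin 2) (Fin 2) ℚ_[p] :=
  Matrix.diagonal ![(p : ℚ_[p]) ^ (-(m : ℤ)), (p : ℚ_[p]) ^ (m : ℤ)]


namespace SL2Zp

variable {p : ℕ} [Fact p.Prime]

lemma mul_mem {a b : Matrix (Fin 2) (Fin 2) ℚ_[p]} (ha : a ∈ SL2Zp p) (hb : b ∈ SL2Zp p) :
    a * b ∈ SL2Zp p := by
  refine ⟨by rw [Matrix.det_mul, ha.1, hb.1, one_mul], fun i j => ?_⟩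
  rw [Matrix.mul_apply, Fin.sum_univ_two]
  refine (Padic.nonarchimedean _ _).trans (max_le ?_ ?_) <;>
    exact norm_mul_le_of_le (ha.2 _ _) (hb.2 _ _) |>.trans (by norm_num)

lemma adjugate_mem {a : Matrix (Fin 2) (Fin 2) ℚ_[p]} (ha : a ∈ SL2Zp p) :
    a.adjugate ∈ SL2Zp p := by
  refine ⟨by simp [Matrix.det_adjugate, ha.1], fun i j => ?_⟩
  fin_cases i <;> fin_cases j <;> simpa [Matrix.adjugate_fin_two] using ha.2 _ _

lemma mul_mem_iff {a k : Matrix (Fin 2) (Fin 2) ℚ_[p]} (ha : a ∈ SL2Zp p) :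
    a * k ∈ SL2Zp p ↔ k ∈ SL2Zp p := by
  refine ⟨fun h => ?_, mul_mem ha⟩
  have hk : a.adjugate * (a * k) = k := by
    rw [← mul_assoc, Matrix.adjugate_mul, ha.1, one_smul, one_mul]
  exact hk ▸ mul_mem (adjugate_mem ha) h

lemma unipotent_mem {x : ℚ_[p]} (hx : ‖x‖ ≤ 1) : !![1, x; 0, 1] ∈ SL2Zp p := by
  refine ⟨by simp [Matrix.det_fin_two_of], fun i j => ?_⟩
  fin_cases i <;> fin_cases j <;> simp [hx]

lemma weyl_mem : !![0, -1; 1, 0] ∈ SL2Zp p := by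
  refine ⟨by simp [Matrix.det_fin_two_of], fun i j => ?_⟩
  fin_cases i <;> fin_cases j <;> simp

lemma isClosed : IsClosed (SL2Zp p) := by
  simp only [SL2Zp, Set.ofPred_and, Set.ofPred_forall]
  exact (isClosed_eq (by fun_prop) continuous_const).inter <|
    isClosed_iInter fun i => isClosed_iInter fun j =>
      isClosed_le ((continuous_id.matrix_elem i j).norm) continuous_const

lemma max_norm_col_eq_one {k : Matrix (Fin 2) (Fin 2) ℚ_[p]} (hk : k ∈ SL2Zp p) :
    max ‖k 0 0‖ ‖k 1 0‖ = 1 := by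
  refine le_antisymm (max_le (hk.2 0 0) (hk.2 1 0)) ?_
  have hdet := hk.1
  rw [Matrix.det_fin_two, sub_eq_add_neg] at hdet
  calc (1 : ℝ) = ‖k 0 0 * k 1 1 + -(k 0 1 * k 1 0)‖ := by rw [hdet, norm_one]
    _ ≤ max ‖k 0 0 * k 1 1‖ ‖-(k 0 1 * k 1 0)‖ := Padic.nonarchimedean _ _
    _ ≤ max ‖k 0 0‖ ‖k 1 0‖ := by
      rw [norm_neg, norm_mul, norm_mul]
      exact max_le_max (mul_le_of_le_one_right (norm_nonneg _) (hk.2 1 1))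
        (mul_le_of_le_one_left (norm_nonneg _) (hk.2 0 1))

end SL2Zp

lemma Padic.norm_le_zpow_sub_one_of_lt {p : ℕ} [Fact p.Prime] {x : ℚ_[p]} {n : ℤ}
    (h : ‖x‖ < (p : ℝ) ^ n) : ‖x‖ ≤ (p : ℝ) ^ (n - 1) :=
  (Padic.norm_le_pow_iff_norm_lt_pow_add_one x (n - 1)).2 (by rwa [sub_add_cancel])

section

variable {p : ℕ} [Fact p.Prime]

lemma one_le_natCast_prime : (1 : ℝ) ≤ p := by exact_mod_cast (Fact.out : p.Prime).one_le

lemma natCast_prime_pos : (0 : ℝ) < p := by exact_mod_cast (Fact.out : p.Prime).pos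

/-- The set `B_j(a)` above; the paper's `F_n`, `n ≥ 0`, is
`ratioBall p n 0 \ ratioBall p (n + 1) 0`. -/
def ratioBall (p : ℕ) [Fact p.Prime] (j : ℕ) (a : ℚ_[p]) : Set (Matrix (Fin 2) (Fin 2) ℚ_[p]) :=
  SL2Zp p ∩ {k | ‖k 1 0‖ = 1 ∧ ‖k 0 0 - a * k 1 0‖ ≤ (p : ℝ) ^ (-(j : ℤ))}

/-- The set `B_∞` above, the union of the paper's `F_{-n}`, `n ≥ 1`. -/
def ratioBallInfty (p : ℕ) [Fact p.Prime] : Set (Matrix (Fin 2) (Fin 2) ℚ_[p]) :=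
  SL2Zp p ∩ {k | ‖k 0 0‖ = 1 ∧ ‖k 1 0‖ ≤ (p : ℝ) ^ (-1 : ℤ)}

lemma ratioBall_succ_subset (j : ℕ) (a : ℚ_[p]) : ratioBall p (j + 1) a ⊆ ratioBall p j a :=
  fun _ ⟨hk, h10, hle⟩ => ⟨hk, h10, hle.trans <|
    zpow_le_zpow_right₀ one_le_natCast_prime (by omega)⟩

lemma isClosed_ratioBall (j : ℕ) (a : ℚ_[p]) : IsClosed (ratioBall p j a) := by
  refine SL2Zp.isClosed.inter ?_
  simp only [Set.ofPred_and]
  exact (isClosed_eq (by fun_prop) continuous_const).inter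
    (isClosed_le (by fun_prop) continuous_const)

lemma isClosed_ratioBallInfty : IsClosed (ratioBallInfty p) := by
  refine SL2Zp.isClosed.inter ?_
  simp only [Set.ofPred_and]
  exact (isClosed_eq (by fun_prop) continuous_const).inter
    (isClosed_le (by fun_prop) continuous_const)

lemma preimage_unipotent_mul_ratioBall {x : ℚ_[p]} (hx : ‖x‖ ≤ 1) (j : ℕ) (a : ℚ_[p]) :
    (!![1, x; 0, 1] * ·) ⁻¹' ratioBall p j a = ratioBall p j (a - x) := by
  ext k
  have h10 : (!![1, x; 0, 1] * k) 1 0 = k 1 0 := by simp [Matrix.mul_apply]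
  have h00 : (!![1, x; 0, 1] * k) 0 0 - a * k 1 0 = k 0 0 - (a - x) * k 1 0 := by
    simp [Matrix.mul_apply]
    ring
  simp only [ratioBall, Set.mem_preimage, Set.mem_inter_iff,
    SL2Zp.mul_mem_iff (SL2Zp.unipotent_mem hx), Set.mem_ofPred_eq, h10, h00]

lemma preimage_weyl_mul_ratioBall_one :
    (!![0, -1; 1, 0] * ·) ⁻¹' ratioBall p 1 0 = ratioBallInfty p := by
  ext k
  simp only [ratioBall, ratioBallInfty, Set.mem_preimage, Set.mem_inter_iff,
    SL2Zp.mul_mem_iff SL2Zp.weyl_mem, Set.mem_ofPred_eq]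
  simp [Matrix.mul_apply, Fin.sum_univ_two]

lemma ratioBall_zero_union_ratioBallInfty : ratioBall p 0 0 ∪ ratioBallInfty p = SL2Zp p := by
  refine subset_antisymm (Set.union_subset Set.inter_subset_left Set.inter_subset_left)
    fun k hk => ?_
  by_cases h10 : ‖k 1 0‖ = 1
  · exact Or.inl ⟨hk, h10, by simpa using hk.2 0 0⟩
  · have h10lt : ‖k 1 0‖ < (p : ℝ) ^ (0 : ℤ) := by simpa using (hk.2 1 0).lt_of_ne h10
    have h00 : ‖k 0 0‖ = 1 := by
      have hmax := SL2Zp.max_norm_col_eq_one hk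
      rcases max_choice ‖k 0 0‖ ‖k 1 0‖ with h | h <;> rw [h] at hmax
      exacts [hmax, absurd hmax h10]
    exact Or.inr ⟨hk, h00, Padic.norm_le_zpow_sub_one_of_lt h10lt⟩

lemma disjoint_ratioBall_zero_ratioBallInfty : Disjoint (ratioBall p 0 0) (ratioBallInfty p) := by
  refine Set.disjoint_left.2 fun k ⟨_, h10, _⟩ ⟨_, _, h10'⟩ => ?_
  rw [h10] at h10'
  exact h10'.not_gt (zpow_lt_one_of_neg₀ (mod_cast (Fact.out : p.Prime).one_lt) (by norm_num))

lemma ratioBall_zero_eq_biUnion (j : ℕ) :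
    ratioBall p 0 0 = ⋃ a ∈ Finset.range (p ^ j), ratioBall p j (a : ℚ_[p]) := by
  ext k
  simp only [Set.mem_iUnion, Finset.mem_range, exists_prop]
  constructor
  · rintro ⟨hk, h10, -⟩
    have hk10 : k 1 0 ≠ 0 := norm_ne_zero_iff.1 (h10 ▸ one_ne_zero)
    let z : ℤ_[p] := ⟨k 0 0 / k 1 0, by rw [norm_div, h10, div_one]; exact hk.2 0 0⟩
    refine ⟨z.appr j, z.appr_lt j, hk, h10, ?_⟩
    have hcoe : ((z - z.appr j : ℤ_[p]) : ℚ_[p]) * k 1 0 = k 0 0 - (z.appr j : ℚ_[p]) * k 1 0 := by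
      rw [PadicInt.coe_sub, PadicInt.coe_natCast, sub_mul, div_mul_cancel₀ _ hk10]
    calc ‖k 0 0 - (z.appr j : ℚ_[p]) * k 1 0‖ = ‖z - z.appr j‖ := by
          rw [← hcoe, norm_mul, h10, mul_one, PadicInt.norm_def]
      _ ≤ _ := (PadicInt.norm_le_pow_iff_mem_span_pow _ j).2 (z.appr_spec j)
  · rintro ⟨a, -, hk, h10, -⟩
    exact ⟨hk, h10, by simpa using hk.2 0 0⟩

lemma pairwiseDisjoint_ratioBall (j : ℕ) :
    (Finset.range (p ^ j) : Set ℕ).PairwiseDisjoint fun a : ℕ => ratioBall p j (a : ℚ_[p]) := by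
  intro a ha b hb hab
  refine Set.disjoint_left.2 fun k ⟨_, h10, hka⟩ ⟨_, _, hkb⟩ => hab ?_
  have hdist : ‖((b - a : ℤ) : ℚ_[p])‖ ≤ (p : ℝ) ^ (-(j : ℤ)) := by
    have hsplit : ((b - a : ℤ) : ℚ_[p]) * k 1 0 =
        (k 0 0 - a * k 1 0) + -(k 0 0 - b * k 1 0) := by
      push_cast
      ring
    rw [← mul_one ‖_‖, ← h10, ← norm_mul, hsplit]
    exact (Padic.nonarchimedean _ _).trans (max_le hka (by rwa [norm_neg]))
  have hdvd := (Padic.norm_int_le_pow_iff_dvd _ j).1 hdist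
  simp only [Finset.coe_range, Set.mem_Iio] at ha hb
  have ha' : (a : ℤ) < (p : ℤ) ^ j := by exact_mod_cast ha
  have hb' : (b : ℤ) < (p : ℤ) ^ j := by exact_mod_cast hb
  have := Int.eq_zero_of_abs_lt_dvd hdvd (abs_sub_lt_iff.2 ⟨by omega, by omega⟩)
  omega

section Measure

variable [MeasurableSpace (Matrix (Fin 2) (Fin 2) ℚ_[p])]
  [BorelSpace (Matrix (Fin 2) (Fin 2) ℚ_[p])]
  {μ : Measure (Matrix (Fin 2) (Fin 2) ℚ_[p])}
  (hinv : ∀ k₀ ∈ SL2Zp p, Measure.map (fun x => k₀ * x) μ = μ)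
include hinv

lemma measure_preimage_mul_left {k₀ : Matrix (Fin 2) (Fin 2) ℚ_[p]} (hk₀ : k₀ ∈ SL2Zp p)
    {s : Set (Matrix (Fin 2) (Fin 2) ℚ_[p])} (hs : MeasurableSet s) :
    μ ((k₀ * ·) ⁻¹' s) = μ s := by
  conv_rhs => rw [← hinv k₀ hk₀, Measure.map_apply (by fun_prop) hs]

lemma measure_ratioBall_eq (j : ℕ) {a : ℚ_[p]} (ha : ‖a‖ ≤ 1) :
    μ (ratioBall p j a) = μ (ratioBall p j 0) := by
  rw [← sub_self a, ← preimage_unipotent_mul_ratioBall ha,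
    measure_preimage_mul_left hinv (SL2Zp.unipotent_mem ha) (isClosed_ratioBall j a).measurableSet]

lemma measure_ratioBall_zero (j : ℕ) : μ (ratioBall p 0 0) = p ^ j * μ (ratioBall p j 0) := by
  rw [ratioBall_zero_eq_biUnion j, measure_biUnion_finset (pairwiseDisjoint_ratioBall j)
      fun a _ => (isClosed_ratioBall j _).measurableSet,
    Finset.sum_congr rfl fun a _ =>
      measure_ratioBall_eq hinv j (by exact_mod_cast Padic.norm_int_le_one a),
    Finset.sum_const, Finset.card_range, nsmul_eq_mul, Nat.cast_pow]

lemma measure_ratioBallInfty : μ (ratioBallInfty p) = μ (ratioBall p 1 0) := by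
  rw [← preimage_weyl_mul_ratioBall_one]
  exact measure_preimage_mul_left hinv SL2Zp.weyl_mem (isClosed_ratioBall 1 0).measurableSet

lemma measureReal_ratioBall [IsProbabilityMeasure μ] (hsupp : μ (SL2Zp p)ᶜ = 0) (j : ℕ) :
    μ.real (ratioBall p j 0) = (p : ℝ) ^ (-(j : ℤ)) * (p / (p + 1)) := by
  have hscale (j : ℕ) : μ.real (ratioBall p 0 0) = p ^ j * μ.real (ratioBall p j 0) := by
    simp [measureReal_def, measure_ratioBall_zero hinv j]
  have htotal : μ.real (ratioBall p 0 0) + μ.real (ratioBall p 1 0) = 1 := by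
    rw [measureReal_def, measureReal_def, ← measure_ratioBallInfty hinv,
      ← ENNReal.toReal_add (measure_ne_top μ _) (measure_ne_top μ _),
      ← measure_union disjoint_ratioBall_zero_ratioBallInfty
        isClosed_ratioBallInfty.measurableSet, ratioBall_zero_union_ratioBallInfty,
      (prob_compl_eq_zero_iff SL2Zp.isClosed.measurableSet).1 hsupp, ENNReal.toReal_one]
  have hp := (natCast_prime_pos (p := p)).ne'
  rw [hscale 1, pow_one] at htotal
  have h0 := hscale j
  rw [hscale 1, pow_one] at h0
  rw [zpow_neg, zpow_natCast]
  field_simp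
  linear_combination (p : ℝ) * htotal - (p + 1 : ℝ) * h0

end Measure

noncomputable def harishChandraIntegrand (p : ℕ) [Fact p.Prime] (m : ℕ)
    (k : Matrix (Fin 2) (Fin 2) ℚ_[p]) : ℝ :=
  (max ‖(diagPm p m * k) 0 0‖ ‖(diagPm p m * k) 1 0‖)⁻¹

section Integrand

variable (m : ℕ) {k : Matrix (Fin 2) (Fin 2) ℚ_[p]}

lemma harishChandraIntegrand_eq (k : Matrix (Fin 2) (Fin 2) ℚ_[p]) :
    harishChandraIntegrand p m k =
      (max ((p : ℝ) ^ (m : ℤ) * ‖k 0 0‖) ((p : ℝ) ^ (-(m : ℤ)) * ‖k 1 0‖))⁻¹ := by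
  simp [harishChandraIntegrand, diagPm, Matrix.diagonal_mul]

lemma harishChandraIntegrand_of_mem_ratioBallInfty (hk : k ∈ ratioBallInfty p) :
    harishChandraIntegrand p m k = (p : ℝ) ^ (-(m : ℤ)) := by
  obtain ⟨hk, h00, -⟩ := hk
  have hle : (p : ℝ) ^ (-(m : ℤ)) * ‖k 1 0‖ ≤ (p : ℝ) ^ (m : ℤ) :=
    (mul_le_of_le_one_right (zpow_pos natCast_prime_pos _).le (hk.2 1 0)).trans
      (zpow_le_zpow_right₀ one_le_natCast_prime (by omega))
  rw [harishChandraIntegrand_eq, h00, mul_one, max_eq_left hle, zpow_neg]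

lemma harishChandraIntegrand_of_mem_sdiff {n : ℕ} (hn : n ≤ 2 * m)
    (hk : k ∈ ratioBall p n 0 \ ratioBall p (n + 1) 0) :
    harishChandraIntegrand p m k = (p : ℝ) ^ ((n : ℤ) - m) := by
  obtain ⟨⟨hk, h10, h00⟩, hk'⟩ := hk
  simp only [zero_mul, sub_zero] at h00
  have h00 : ‖k 0 0‖ = (p : ℝ) ^ (-(n : ℤ)) := by
    refine h00.eq_of_not_lt fun hlt => hk' ⟨hk, h10, ?_⟩
    simpa [sub_eq_add_neg, add_comm] using Padic.norm_le_zpow_sub_one_of_lt hlt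
  have hle : (p : ℝ) ^ (-(m : ℤ)) ≤ (p : ℝ) ^ ((m : ℤ) - n) :=
    zpow_le_zpow_right₀ one_le_natCast_prime (by omega)
  rw [harishChandraIntegrand_eq, h00, h10, mul_one, ← zpow_add₀ natCast_prime_pos.ne',
    ← sub_eq_add_neg, max_eq_left hle, ← zpow_neg, neg_sub]

lemma harishChandraIntegrand_of_mem_ratioBall (hk : k ∈ ratioBall p (2 * m) 0) :
    harishChandraIntegrand p m k = (p : ℝ) ^ (m : ℤ) := by
  obtain ⟨-, h10, h00⟩ := hk
  simp only [zero_mul, sub_zero] at h00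
  have hle : (p : ℝ) ^ (m : ℤ) * ‖k 0 0‖ ≤ (p : ℝ) ^ (-(m : ℤ)) := by
    calc (p : ℝ) ^ (m : ℤ) * ‖k 0 0‖ ≤ (p : ℝ) ^ (m : ℤ) * (p : ℝ) ^ (-((2 * m : ℕ) : ℤ)) := by
          gcongr
      _ = (p : ℝ) ^ (-(m : ℤ)) := by
          rw [← zpow_add₀ natCast_prime_pos.ne']
          push_cast
          ring_nf
  rw [harishChandraIntegrand_eq, h10, mul_one, max_eq_right hle, ← zpow_neg, neg_neg]

lemma harishChandraIntegrand_nonneg (k : Matrix (Fin 2) (Fin 2) ℚ_[p]) :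
    0 ≤ harishChandraIntegrand p m k :=
  inv_nonneg.2 (le_max_of_le_left (norm_nonneg _))

lemma harishChandraIntegrand_le (hk : k ∈ SL2Zp p) :
    harishChandraIntegrand p m k ≤ (p : ℝ) ^ (m : ℤ) := by
  have hlow : (p : ℝ) ^ (-(m : ℤ)) ≤
      max ((p : ℝ) ^ (m : ℤ) * ‖k 0 0‖) ((p : ℝ) ^ (-(m : ℤ)) * ‖k 1 0‖) := by
    calc (p : ℝ) ^ (-(m : ℤ)) = (p : ℝ) ^ (-(m : ℤ)) * max ‖k 0 0‖ ‖k 1 0‖ := by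
          rw [SL2Zp.max_norm_col_eq_one hk, mul_one]
      _ = max ((p : ℝ) ^ (-(m : ℤ)) * ‖k 0 0‖) ((p : ℝ) ^ (-(m : ℤ)) * ‖k 1 0‖) :=
          mul_max_of_nonneg _ _ (by positivity)
      _ ≤ _ := max_le_max (mul_le_mul_of_nonneg_right
          (zpow_le_zpow_right₀ one_le_natCast_prime (by omega)) (norm_nonneg _)) le_rfl
  rw [harishChandraIntegrand_eq]
  exact inv_le_of_inv_le₀ (zpow_pos natCast_prime_pos _) (by rwa [← zpow_neg])

end Integrand

section Integral

variable [MeasurableSpace (Matrix (Fin 2) (Fin 2) ℚ_[p])]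
  [BorelSpace (Matrix (Fin 2) (Fin 2) ℚ_[p])]
  {μ : Measure (Matrix (Fin 2) (Fin 2) ℚ_[p])} (m : ℕ)

lemma integrableOn_harishChandraIntegrand [IsFiniteMeasure μ] :
    IntegrableOn (harishChandraIntegrand p m) (SL2Zp p) μ := by
  refine .of_bound (measure_lt_top μ _) ?_ ((p : ℝ) ^ (m : ℤ))
    (ae_restrict_of_forall_mem SL2Zp.isClosed.measurableSet fun k hk => ?_)
  · exact (Measurable.inv (by fun_prop)).aestronglyMeasurable
  · rw [Real.norm_of_nonneg (harishChandraIntegrand_nonneg m k)]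
    exact harishChandraIntegrand_le m hk

variable [IsProbabilityMeasure μ] (hinv : ∀ k₀ ∈ SL2Zp p, Measure.map (fun x => k₀ * x) μ = μ)
  (hsupp : μ (SL2Zp p)ᶜ = 0)
include hinv hsupp

lemma setIntegral_ratioBall_harishChandraIntegrand {n d : ℕ} (hnd : n + d = 2 * m) :
    ∫ k in ratioBall p n 0, harishChandraIntegrand p m k ∂μ =
      (p : ℝ) ^ (-(m : ℤ)) * (d * (p - 1) + p) / (p + 1) := by
  have hp := (natCast_prime_pos (p := p)).ne'
  have hint := integrableOn_harishChandraIntegrand m (μ := μ)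
  induction d generalizing n with
  | zero =>
    subst hnd
    rw [setIntegral_congr_fun (isClosed_ratioBall _ _).measurableSet
        fun k hk => harishChandraIntegrand_of_mem_ratioBall m hk,
      setIntegral_const, measureReal_ratioBall hinv hsupp, smul_eq_mul]
    push_cast
    rw [mul_comm 2 (m : ℤ), zpow_neg, zpow_neg, zpow_mul]
    field_simp
    ring
  | succ d ih =>
    have hsub := ratioBall_succ_subset (p := p) n 0
    have hint_n : IntegrableOn (harishChandraIntegrand p m) (ratioBall p n 0) μ :=
      hint.mono_set Set.inter_subset_left
    rw [← Set.sdiff_union_of_subset hsub, setIntegral_union Set.disjoint_sdiff_left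
        (isClosed_ratioBall _ _).measurableSet (hint_n.mono_set Set.sdiff_subset)
        (hint_n.mono_set hsub),
      setIntegral_congr_fun ((isClosed_ratioBall _ _).measurableSet.diff
          (isClosed_ratioBall _ _).measurableSet)
        fun k hk => harishChandraIntegrand_of_mem_sdiff m (by omega) hk,
      setIntegral_const, smul_eq_mul, measureReal_sdiff hsub (isClosed_ratioBall _ _).measurableSet,
      measureReal_ratioBall hinv hsupp, measureReal_ratioBall hinv hsupp, ih (by omega)]
    rw [zpow_sub₀ hp, zpow_neg, zpow_neg, zpow_neg, zpow_natCast, zpow_natCast]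
    push_cast
    field_simp
    ring

end Integral

end

/-- The value of the Harish-Chandra function of `SL(2, ℚ_p)` at `diag(p^{−m}, p^m)`:
`Ξ_p(diag(p^{−m}, p^m)) = ∫_{SL(2,ℤ_p)} ‖diag(p^{−m}, p^m) k e₁‖_p^{−1} dk
  = p^{−m}((2m+1)(p−1) + 2)/(p+1)`, where `dk` is the Haar probability measure on `SL(2, ℤ_p)`
and `‖·‖_p` is the max-norm on `ℚ_p²`. -/
theorem harish_chandra_formula {p : ℕ} [Fact p.Prime]
    [MeasurableSpace (Matrix (Fin 2) (Fin 2) ℚ_[p])]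
    [BorelSpace (Matrix (Fin 2) (Fin 2) ℚ_[p])]
    (μ : Measure (Matrix (Fin 2) (Fin 2) ℚ_[p])) [IsProbabilityMeasure μ]
    (hsupp : μ (SL2Zp p)ᶜ = 0)
    (hinv : ∀ k₀ ∈ SL2Zp p, Measure.map (fun x => k₀ * x) μ = μ)
    (m : ℕ) :
    ∫ k in SL2Zp p,
        (max ‖(diagPm p m * k) 0 0‖ ‖(diagPm p m * k) 1 0‖)⁻¹ ∂μ =
      (p : ℝ) ^ (-(m : ℤ)) * ((2 * m + 1) * ((p : ℝ) - 1) + 2) / ((p : ℝ) + 1) := by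
  have hint := integrableOn_harishChandraIntegrand m (μ := μ)
  have hp := (natCast_prime_pos (p := p)).ne'
  calc ∫ k in SL2Zp p, harishChandraIntegrand p m k ∂μ
      = (∫ k in ratioBall p 0 0, harishChandraIntegrand p m k ∂μ) +
          ∫ k in ratioBallInfty p, harishChandraIntegrand p m k ∂μ := by
        rw [← ratioBall_zero_union_ratioBallInfty]
        exact setIntegral_union disjoint_ratioBall_zero_ratioBallInfty
          isClosed_ratioBallInfty.measurableSet (hint.mono_set Set.inter_subset_left)
          (hint.mono_set Set.inter_subset_left)
    _ = (p : ℝ) ^ (-(m : ℤ)) * ((2 * m : ℕ) * (p - 1) + p) / (p + 1) +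
          μ.real (ratioBall p 1 0) * (p : ℝ) ^ (-(m : ℤ)) := by
        rw [setIntegral_ratioBall_harishChandraIntegrand m hinv hsupp (zero_add _),
          setIntegral_congr_fun isClosed_ratioBallInfty.measurableSet
            fun k hk => harishChandraIntegrand_of_mem_ratioBallInfty m hk,
          setIntegral_const, smul_eq_mul, measureReal_def, measure_ratioBallInfty hinv,
          ← measureReal_def]
    _ = _ := by
        rw [measureReal_ratioBall hinv hsupp]
        push_cast
        field_simp
        ring
end

section
/- Let p be a prime, d ≥ 1, and q(t) ∈ ℚ_p[t] a nonzero polynomial of degree ≤ d. Suppose a₀, …, a_d are d+1 distinct residues mod p^m (m ≥ 1) such that for each i there exists t_i ∈ a_i + p^mℤ_p with |q(t_i)|_p < ε. Then sup_{z∈ℤ_p} |q(z)|_p ≤ ε p^{d(m−1)}. -/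
open Finset

theorem padic_norm_ge_aux {p : ℕ} [Fact p.Prime] {m : ℕ} (hm : 1 ≤ m) {x : ℚ_[p]}
    (hx : x ≠ 0) (h : (p : ℝ) ^ (-(m : ℤ)) < ‖x‖) :
    (p : ℝ) ^ (-((m : ℤ) - 1)) ≤ ‖x‖ := by
  have hp : (1 : ℝ) < p := by exact_mod_cast (Fact.out : p.Prime).one_lt
  rw [Padic.norm_eq_zpow_neg_valuation hx] at h ⊢
  rw [zpow_lt_zpow_iff_right₀ hp] at h
  rw [zpow_le_zpow_iff_right₀ hp]
  omega

/-- Let `q ∈ ℚ_p[t]` be nonzero of degree `≤ d`, and suppose `t₀, …, t_d ∈ ℤ_p` lie in `d + 1`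
pairwise distinct residue classes mod `p^m` and satisfy `|q(t_i)|_p < ε`. Then
`|q(z)|_p ≤ ε p^{d(m−1)}` for every `z ∈ ℤ_p`. -/
theorem padic_polynomial_lagrange_bound {p : ℕ} [Fact p.Prime] {d m : ℕ} (hd : 1 ≤ d)
    (hm : 1 ≤ m) (q : Polynomial ℚ_[p]) (hq : q ≠ 0) (hdeg : q.natDegree ≤ d)
    (ε : ℝ) (t : Fin (d + 1) → ℚ_[p]) (htint : ∀ i, ‖t i‖ ≤ 1)
    (hdist : ∀ i j, i ≠ j → (p : ℝ) ^ (-(m : ℤ)) < ‖t i - t j‖)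
    (hsmall : ∀ i, ‖q.eval (t i)‖ < ε) :
    ∀ z : ℚ_[p], ‖z‖ ≤ 1 → ‖q.eval z‖ ≤ ε * (p : ℝ) ^ (d * (m - 1)) := by
  intro z hz
  have hp : (1 : ℝ) < p := by exact_mod_cast (Fact.out : p.Prime).one_lt
  have hp0 : (0 : ℝ) < p := lt_trans one_pos hp
  have hε : 0 < ε := lt_of_le_of_lt (norm_nonneg _) (hsmall 0)
  -- t is injective
  have htne : ∀ i j : Fin (d + 1), i ≠ j → t i ≠ t j := by
    intro i j hij heq
    have := hdist i j hij
    rw [heq, sub_self, norm_zero] at this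
    exact absurd this (not_lt.mpr (le_of_lt (zpow_pos hp0 _)))
  have hinj : Set.InjOn t (Finset.univ : Finset (Fin (d + 1))) := by
    intro i _ j _ h
    by_contra hij
    exact htne i j hij h
  have hdeglt : q.degree < (Finset.univ : Finset (Fin (d + 1))).card := by
    rw [Finset.card_univ, Fintype.card_fin]
    exact lt_of_le_of_lt (Polynomial.degree_le_natDegree)
      (by exact_mod_cast Nat.lt_succ_of_le hdeg)
  have hinterp := Lagrange.eq_interpolate hinj hdeglt
  -- bound on ‖z - t j‖
  have hzt : ∀ j, ‖z - t j‖ ≤ 1 := by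
    intro j
    calc ‖z - t j‖ = ‖z + (-(t j))‖ := by rw [sub_eq_add_neg]
    _ ≤ max ‖z‖ ‖-(t j)‖ := Padic.nonarchimedean z (-(t j))
    _ ≤ 1 := max_le hz (by rw [norm_neg]; exact htint j)
  -- bound each term
  have hterm : ∀ i : Fin (d + 1),
      ‖Polynomial.eval z (Polynomial.C (q.eval (t i)) * Lagrange.basis Finset.univ t i)‖
        ≤ ε * (p : ℝ) ^ (d * (m - 1)) := by
    intro i
    rw [Polynomial.eval_mul, Polynomial.eval_C, norm_mul, Lagrange.basis,
      Polynomial.eval_prod, norm_prod]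
    have hprod : ∏ j ∈ Finset.univ.erase i,
        ‖Polynomial.eval z (Lagrange.basisDivisor (t i) (t j))‖
          ≤ ∏ j ∈ Finset.univ.erase i, ((p : ℝ) ^ (m - 1)) := by
      refine Finset.prod_le_prod (fun j _ => norm_nonneg _) ?_
      intro j hj
      have hij : i ≠ j := (Finset.mem_erase.mp hj).1.symm
      have hne : t i - t j ≠ 0 := sub_ne_zero.mpr (htne i j hij)
      have hge := padic_norm_ge_aux hm hne (hdist i j hij)
      rw [Lagrange.basisDivisor, Polynomial.eval_mul, Polynomial.eval_C, norm_mul,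
        Polynomial.eval_sub, Polynomial.eval_X, Polynomial.eval_C, norm_inv]
      calc ‖t i - t j‖⁻¹ * ‖z - t j‖ ≤ ‖t i - t j‖⁻¹ * 1 := by
            refine mul_le_mul_of_nonneg_left (hzt j) (inv_nonneg.mpr (norm_nonneg _))
      _ = ‖t i - t j‖⁻¹ := mul_one _
      _ ≤ ((p : ℝ) ^ (-((m : ℤ) - 1)))⁻¹ := by
            refine inv_anti₀ (zpow_pos hp0 _) hge
      _ = (p : ℝ) ^ ((m : ℤ) - 1) := by rw [← zpow_neg, neg_neg]
      _ = (p : ℝ) ^ (m - 1) := by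
            rw [← zpow_natCast]
            congr 1
            omega
    rw [Finset.prod_const] at hprod
    have hcard : (Finset.univ.erase i).card = d := by
      rw [Finset.card_erase_of_mem (Finset.mem_univ i), Finset.card_univ, Fintype.card_fin]
      omega
    rw [hcard] at hprod
    calc ‖q.eval (t i)‖ * ∏ j ∈ Finset.univ.erase i,
          ‖Polynomial.eval z (Lagrange.basisDivisor (t i) (t j))‖
        ≤ ε * ((p : ℝ) ^ (m - 1)) ^ d := by
          refine mul_le_mul (le_of_lt (hsmall i)) hprod
            (Finset.prod_nonneg fun j _ => norm_nonneg _) (le_of_lt hε)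
      _ = ε * (p : ℝ) ^ (d * (m - 1)) := by rw [← pow_mul, Nat.mul_comm]
  -- combine
  conv_lhs => rw [hinterp]
  rw [Lagrange.interpolate_apply, Polynomial.eval_finset_sum]
  exact IsUltrametricDist.norm_sum_le_of_forall_le_of_nonneg
      (mul_nonneg hε.le (pow_nonneg hp0.le _)) (fun i _ => hterm i)
end

section
/- Let β ≤ 1 ≤ α be positive reals and let g ∈ GL(d,ℝ) with det g = ±1 lie in the Siegel set 𝔖(α,β) = K A_α N_β. Then ‖g‖_∞ ≤ √d · α^{(d−1)²/2} · max{1, ‖g e₁‖_euc^{−(d−1)}}, where ‖g‖_∞ is the max of absolute values of entries and ‖·‖_euc the Euclidean norm. -/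
/-!
Index from `0` to `d - 1` and write `g = k a n`. Since `k` is orthogonal, `g` and `a n` have
columns of equal Euclidean norm; as `n` is unipotent upper triangular with entries bounded by `1`,
the first column of `g` has norm `a₀` and every column has norm at most `√d · max a_l`.
For the `a_l`, multiply the chain inequalities `a_l ≤ α^(m-l) a_m` (`m ≥ l`) and
`a₀ ≤ α^m a_m` (`m < l`) over all `m` and use `∏ a_m = 1`: this gives `a_l^(d-l) a₀^l ≤ α^T`
with `2T ≤ (d - l)(d - 1)²`, and taking `(d - l)`-th roots gives the bound.
-/

open Finset

theorem two_mul_sum_range_id_add_sum_range_id_le (l s : ℕ) :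
    2 * (∑ k ∈ range (s + 1), k + ∑ k ∈ range l, k) ≤ (s + 1) * (l + s) ^ 2 := by
  have hs := sum_range_id_mul_two (s + 1)
  have hl := sum_range_id_mul_two l
  have hl' : l * (l - 1) ≤ l * l := Nat.mul_le_mul_left _ (Nat.sub_le _ _)
  rw [Nat.add_sub_cancel] at hs
  have hss : s ≤ s * (l + s) ^ 2 := by
    rcases Nat.eq_zero_or_pos s with rfl | hs0
    · simp
    · exact Nat.le_mul_of_pos_right s (by positivity)
  nlinarith

theorem le_rpow_mul_max_of_pow_mul_pow_le {x A α : ℝ} {r l n T : ℕ} (hx : 0 ≤ x) (hA : 0 < A)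
    (hα : 1 ≤ α) (hr : r ≠ 0) (hl : l ≤ n) (hT : 2 * T ≤ r * n ^ 2)
    (h : x ^ r * A ^ l ≤ α ^ T) :
    x ≤ α ^ ((n : ℝ) ^ 2 / 2) * max 1 (A ^ (-(n : ℝ))) := by
  set C := α ^ ((n : ℝ) ^ 2 / 2)
  set M := max 1 (A ^ (-(n : ℝ)))
  have hM : 1 ≤ M := le_max_left _ _
  have hαT : α ^ T ≤ C ^ r := by
    rw [← Real.rpow_natCast, ← Real.rpow_natCast, ← Real.rpow_mul (by positivity)]
    refine Real.rpow_le_rpow_of_exponent_le hα ?_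
    have : (2 * T : ℝ) ≤ r * n ^ 2 := by exact_mod_cast hT
    linarith
  have hMA : 1 ≤ M ^ r * A ^ l := by
    rcases le_or_gt 1 A with hA1 | hA1
    · exact one_le_mul_of_one_le_of_one_le (one_le_pow₀ hM) (one_le_pow₀ hA1)
    · have hMn : 1 ≤ M * A ^ n := by
        have : (A ^ n)⁻¹ ≤ M := by
          rw [← Real.rpow_natCast, ← Real.rpow_neg hA.le]
          exact le_max_right _ _
        rwa [inv_le_iff_one_le_mul₀ (by positivity)] at this
      calc 1 ≤ M * A ^ n := hMn
        _ ≤ M ^ r * A ^ l := mul_le_mul (le_self_pow₀ hM hr)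
          (pow_le_pow_of_le_one hA.le hA1.le hl) (by positivity) (by positivity)
  have hpow : x ^ r ≤ (C * M) ^ r :=
    calc x ^ r ≤ x ^ r * (M ^ r * A ^ l) := le_mul_of_one_le_right (by positivity) hMA
      _ = M ^ r * (x ^ r * A ^ l) := by ring
      _ ≤ M ^ r * C ^ r := mul_le_mul_of_nonneg_left (h.trans hαT) (by positivity)
      _ = (C * M) ^ r := by ring
  exact le_of_pow_le_pow_left₀ hr (by positivity) hpow

section Chain

variable {α : ℝ} {d : ℕ} {b : ℕ → ℝ}

theorem le_pow_mul_of_chain (hα : 0 ≤ α) (hchain : ∀ m, m + 1 < d → b m ≤ α * b (m + 1))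
    {m k : ℕ} (hk : m + k < d) : b m ≤ α ^ k * b (m + k) := by
  induction k with
  | zero => simp
  | succ k ih =>
    calc b m ≤ α ^ k * b (m + k) := ih (by omega)
      _ ≤ α ^ k * (α * b (m + k + 1)) :=
        mul_le_mul_of_nonneg_left (hchain _ (by omega)) (by positivity)
      _ = α ^ (k + 1) * b (m + (k + 1)) := by ring_nf

theorem pow_le_pow_sum_mul_prod_of_chain (hα : 0 ≤ α)
    (hchain : ∀ m, m + 1 < d → b m ≤ α * b (m + 1)) {l s : ℕ} (hb : 0 ≤ b l)
    (hls : l + s ≤ d) :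
    b l ^ s ≤ α ^ (∑ k ∈ range s, k) * ∏ k ∈ range s, b (l + k) := by
  rw [← prod_pow_eq_pow_sum, ← prod_mul_distrib, pow_eq_prod_const]
  exact prod_le_prod (fun _ _ => hb) fun k hk => le_pow_mul_of_chain hα hchain (by
    have := mem_range.mp hk; omega)

theorem le_rpow_mul_max_of_chain_of_prod_range_eq_one (hα : 1 ≤ α) (hb : ∀ m < d, 0 < b m)
    (hchain : ∀ m, m + 1 < d → b m ≤ α * b (m + 1)) (hprod : ∏ m ∈ range d, b m = 1)
    {l : ℕ} (hl : l < d) :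
    b l ≤ α ^ (((d : ℝ) - 1) ^ 2 / 2) * max 1 (b 0 ^ (-((d : ℝ) - 1))) := by
  obtain ⟨s, rfl⟩ := Nat.exists_eq_add_of_lt hl
  have hα0 : 0 ≤ α := zero_le_one.trans hα
  have hupper := pow_le_pow_sum_mul_prod_of_chain hα0 hchain (hb l hl).le le_rfl (s := s + 1)
  have hlower := pow_le_pow_sum_mul_prod_of_chain hα0 hchain (hb 0 (by omega)).le
    (by omega) (l := 0) (s := l)
  simp only [zero_add] at hlower
  have hmain : b l ^ (s + 1) * b 0 ^ l ≤
      α ^ (∑ k ∈ range (s + 1), k + ∑ k ∈ range l, k) := by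
    calc b l ^ (s + 1) * b 0 ^ l
        ≤ (α ^ (∑ k ∈ range (s + 1), k) * ∏ k ∈ range (s + 1), b (l + k)) *
          (α ^ (∑ k ∈ range l, k) * ∏ k ∈ range l, b k) :=
          mul_le_mul hupper hlower (pow_nonneg (hb 0 (by omega)).le l)
            ((pow_nonneg (hb l hl).le _).trans hupper)
      _ = α ^ (∑ k ∈ range (s + 1), k + ∑ k ∈ range l, k) * ∏ m ∈ range (l + (s + 1)), b m := by
          rw [prod_range_add b l (s + 1), pow_add]; ring
      _ = _ := by rw [← add_assoc, hprod, mul_one]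
  have hd : ((l + s + 1 : ℕ) : ℝ) - 1 = ((l + s : ℕ) : ℝ) := by push_cast; ring
  rw [hd]
  exact le_rpow_mul_max_of_pow_mul_pow_le (hb l hl).le (hb 0 (by omega)) hα
    (Nat.succ_ne_zero s) (Nat.le_add_right l s)
    (two_mul_sum_range_id_add_sum_range_id_le l s) hmain

end Chain

theorem le_rpow_mul_max_of_chain_of_prod_eq_one {α : ℝ} {d : ℕ} (hd : 0 < d) (hα : 1 ≤ α)
    {a : Fin d → ℝ} (ha : ∀ i, 0 < a i)
    (hchain : ∀ i j : Fin d, (j : ℕ) = (i : ℕ) + 1 → a i ≤ α * a j) (hprod : ∏ i, a i = 1)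
    (l : Fin d) :
    a l ≤ α ^ (((d : ℝ) - 1) ^ 2 / 2) * max 1 (a ⟨0, hd⟩ ^ (-((d : ℝ) - 1))) := by
  let b : ℕ → ℝ := fun m => if h : m < d then a ⟨m, h⟩ else 1
  have hb : ∀ m (h : m < d), b m = a ⟨m, h⟩ := fun m h => dif_pos h
  have key := le_rpow_mul_max_of_chain_of_prod_range_eq_one (b := b) hα
    (fun m h => by rw [hb m h]; exact ha _)
    (fun m h => by rw [hb m (by omega), hb (m + 1) h]; exact hchain _ _ rfl)
    (by
      rw [← Fin.prod_univ_eq_prod_range, ← hprod]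
      exact prod_congr rfl fun i _ => hb i i.isLt) l.isLt
  rwa [hb 0 hd, hb l l.isLt] at key

theorem Real.sqrt_sum_sq_le_sqrt_card_mul {ι : Type*} [Fintype ι] {x : ι → ℝ} {B : ℝ}
    (hB : 0 ≤ B) (hx : ∀ i, |x i| ≤ B) : √(∑ i, x i ^ 2) ≤ √(Fintype.card ι) * B := by
  rw [← Real.sqrt_sq hB, ← Real.sqrt_mul (Nat.cast_nonneg _)]
  refine Real.sqrt_le_sqrt ?_
  calc ∑ i, x i ^ 2 ≤ ∑ _i : ι, B ^ 2 :=
        sum_le_sum fun i _ => sq_le_sq.mpr ((hx i).trans (le_abs_self B))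
    _ = Fintype.card ι * B ^ 2 := by rw [sum_const, card_univ, nsmul_eq_mul]

namespace Matrix

variable {m n : Type*} [Fintype m]

theorem sum_sq_diagonal_mul_apply_of_isUpperTriangular [LinearOrder m] {N : Matrix m m ℝ}
    (hN : N.IsUpperTriangular) (a : m → ℝ) {j₀ : m} (hj₀ : ∀ l, j₀ ≤ l) :
    ∑ l, (a l * N l j₀) ^ 2 = (a j₀ * N j₀ j₀) ^ 2 :=
  sum_eq_single j₀ (fun l _ hl => by simp [hN (lt_of_le_of_ne (hj₀ l) (Ne.symm hl))])
    (by simp)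

variable [DecidableEq m]

theorem abs_det_eq_one_of_transpose_mul_self_eq_one {k : Matrix m m ℝ} (hk : kᵀ * k = 1) :
    |k.det| = 1 := by
  have h := congrArg det hk
  rw [det_mul, det_transpose, det_one] at h
  rcases mul_self_eq_one_iff.mp h with h | h <;> simp [h]

theorem sum_sq_mul_apply_of_transpose_mul_self_eq_one {k : Matrix m m ℝ} (hk : kᵀ * k = 1)
    (B : Matrix m n ℝ) (j : n) : ∑ i, (k * B) i j ^ 2 = ∑ i, B i j ^ 2 := by
  have hgram : ∀ M : Matrix m n ℝ, (Mᵀ * M) j j = ∑ i, M i j ^ 2 := fun M => by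
    simp only [mul_apply, transpose_apply, sq]
  rw [← hgram, ← hgram, transpose_mul, Matrix.mul_assoc, ← Matrix.mul_assoc kᵀ, hk,
    Matrix.one_mul]

theorem sum_sq_mul_diagonal_mul_apply {k : Matrix m m ℝ} (hk : kᵀ * k = 1) (a : m → ℝ)
    (N : Matrix m n ℝ) (j : n) : ∑ i, (k * diagonal a * N) i j ^ 2 = ∑ l, (a l * N l j) ^ 2 := by
  rw [Matrix.mul_assoc, sum_sq_mul_apply_of_transpose_mul_self_eq_one hk]
  simp only [diagonal_mul]

theorem prod_eq_one_of_abs_det_mul_diagonal_mul_eq_one [LinearOrder m] {k N : Matrix m m ℝ}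
    {a : m → ℝ} (hk : kᵀ * k = 1) (hN : N.IsUpperTriangular) (hN1 : ∀ i, N i i = 1)
    (ha : ∀ i, 0 < a i) (hdet : |(k * diagonal a * N).det| = 1) : ∏ i, a i = 1 := by
  rwa [det_mul, det_mul, det_diagonal, det_of_isUpperTriangular hN,
    prod_congr rfl fun i _ => hN1 i, prod_const_one, mul_one, abs_mul,
    abs_det_eq_one_of_transpose_mul_self_eq_one hk, one_mul,
    abs_of_pos (prod_pos fun i _ => ha i)] at hdet

end Matrix

open Matrix

theorem siegel_set_entry_bound_general {d : ℕ} (hd : 0 < d) (α β : ℝ)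
    (hβ : β ≤ 1) (hα : 1 ≤ α)
    (g k n : Matrix (Fin d) (Fin d) ℝ) (a : Fin d → ℝ)
    (hdet : g.det = 1 ∨ g.det = -1)
    (hk : k.transpose * k = 1)
    (ha : ∀ i, 0 < a i)
    (hchain : ∀ i j : Fin d, (j : ℕ) = (i : ℕ) + 1 → a i ≤ α * a j)
    (hn1 : ∀ i, n i i = 1) (hn0 : ∀ i j, j < i → n i j = 0)
    (hnβ : ∀ i j, i < j → |n i j| ≤ β)
    (hg : g = k * Matrix.diagonal a * n) :
    ∀ i j, |g i j| ≤ Real.sqrt d * α ^ (((d : ℝ) - 1) ^ 2 / 2) *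
      max 1 ((Real.sqrt (∑ i, (g i ⟨0, hd⟩) ^ 2)) ^ (-((d : ℝ) - 1))) := by
  intro i j
  set j₀ : Fin d := ⟨0, hd⟩
  have hn : n.IsUpperTriangular := fun i j h => hn0 i j h
  have hn_abs : ∀ l j, |n l j| ≤ 1 := fun l j => by
    rcases lt_trichotomy l j with h | rfl | h
    · exact (hnβ l j h).trans hβ
    · simp [hn1]
    · simp [hn0 l j h]
  have hprod : ∏ l, a l = 1 := prod_eq_one_of_abs_det_mul_diagonal_mul_eq_one hk hn hn1 ha
    (by rcases hdet with h | h <;> simp [← hg, h])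
  have hfirst : √(∑ i, g i j₀ ^ 2) = a j₀ := by
    rw [hg, sum_sq_mul_diagonal_mul_apply hk,
      sum_sq_diagonal_mul_apply_of_isUpperTriangular hn a fun l => Nat.zero_le l.val, hn1,
      mul_one, Real.sqrt_sq (ha j₀).le]
  set B := α ^ (((d : ℝ) - 1) ^ 2 / 2) * max 1 (a j₀ ^ (-((d : ℝ) - 1)))
  have ha_le : ∀ l, a l ≤ B := le_rpow_mul_max_of_chain_of_prod_eq_one hd hα ha hchain hprod
  rw [hfirst, mul_assoc]
  calc |g i j| ≤ √(∑ i, g i j ^ 2) :=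
        Real.abs_le_sqrt (single_le_sum (fun i _ => sq_nonneg (g i j)) (mem_univ i))
    _ ≤ √(Fintype.card (Fin d)) * B := by
        rw [hg, sum_sq_mul_diagonal_mul_apply hk]
        refine Real.sqrt_sum_sq_le_sqrt_card_mul ((ha j₀).le.trans (ha_le j₀)) fun l => ?_
        rw [abs_mul, abs_of_pos (ha l)]
        exact (mul_le_of_le_one_right (ha l).le (hn_abs l j)).trans (ha_le l)
    _ = √d * B := by rw [Fintype.card_fin]

/-- Let `β ≤ 1 ≤ α` and let `g ∈ GL(d,ℝ)` with `det g = ±1` lie in the Siegel set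
`𝔖(α,β) = K A_α N_β` (so `g = k a n` with `k` orthogonal, `a` positive diagonal with
`a_i ≤ α a_{i+1}`, and `n` unipotent upper triangular with off-diagonal entries bounded by `β`).
Then every entry of `g` is bounded by
`√d · α^{(d−1)²/2} · max {1, ‖g e₁‖_euc^{−(d−1)}}`. -/
theorem siegel_set_entry_bound {d : ℕ} (hd : 0 < d) (α β : ℝ)
    (hβ0 : 0 < β) (hβ : β ≤ 1) (hα : 1 ≤ α)
    (g k n : Matrix (Fin d) (Fin d) ℝ) (a : Fin d → ℝ)
    (hdet : g.det = 1 ∨ g.det = -1)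
    (hk : k.transpose * k = 1)
    (ha : ∀ i, 0 < a i)
    (hchain : ∀ i j : Fin d, (j : ℕ) = (i : ℕ) + 1 → a i ≤ α * a j)
    (hn1 : ∀ i, n i i = 1) (hn0 : ∀ i j, j < i → n i j = 0)
    (hnβ : ∀ i j, i < j → |n i j| ≤ β)
    (hg : g = k * Matrix.diagonal a * n) :
    ∀ i j, |g i j| ≤ Real.sqrt d * α ^ (((d : ℝ) - 1) ^ 2 / 2) *
      max 1 ((Real.sqrt (∑ i, (g i ⟨0, hd⟩) ^ 2)) ^ (-((d : ℝ) - 1))) :=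
  siegel_set_entry_bound_general hd α β hβ hα g k n a hdet hk ha hchain hn1 hn0 hnβ hg
end
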